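/- arXiv:2403.09245 — 6 statements merged into one kernel-verified Lean document; each statement's English description precedes it below -/
import Mathlib

section
/- Let X be a Banach space and let A ⊆ X be a set closed under scalar multiplication by rational numbers. Then the closure of A ∩ B_X equals (closure of A) ∩ B_X, where B_X is the closed unit ball of X. -/
/-- For a Banach space `X` and a set `A ⊆ X` closed under scalar
multiplication by rational numbers, the closure of `A ∩ B_X` equals
`(closure A) ∩ B_X`, where `B_X` is the closed unit ball. -/
theorem stmt0 (X : Type*) [NormedAddCommGroup X] [NormedSpace ℝ X] [CompleteSpace X]
    (A : Set X) (hA : ∀ (q : ℚ) (a : X), a ∈ A → (q : ℝ) • a ∈ A) :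
    closure (A ∩ Metric.closedBall (0 : X) 1) =
      closure A ∩ Metric.closedBall (0 : X) 1 := by
  apply Set.Subset.antisymm
  · intro x hx
    refine ⟨closure_mono Set.inter_subset_left hx, ?_⟩
    exact closure_minimal Set.inter_subset_right Metric.isClosed_closedBall hx
  · rintro x ⟨hxA, hxB⟩
    rw [Metric.mem_closedBall, dist_zero_right] at hxB
    rw [Metric.mem_closure_iff] at hxA ⊢
    intro ε hε
    set δ : ℝ := min (ε / 3) (1 / 2) with hδdef
    have hδpos : 0 < δ := lt_min (by linarith) (by norm_num)
    have hδle : δ ≤ 1 / 2 := min_le_right _ _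
    have hδε : δ ≤ ε / 3 := min_le_left _ _
    obtain ⟨a, haA, hdista⟩ := hxA δ hδpos
    have hna : ‖a‖ ≤ 1 + δ := by
      have h1 : ‖a‖ ≤ ‖x‖ + ‖a - x‖ := by
        have := norm_add_le x (a - x); simpa using this
      have h2 : ‖a - x‖ < δ := by rwa [dist_eq_norm, norm_sub_rev] at hdista
      linarith
    have h1δ : (0 : ℝ) < 1 + δ := by linarith
    obtain ⟨q, hq1, hq2⟩ := exists_rat_btwn
      (show (1 - δ) / (1 + δ) < 1 / (1 + δ) by
        rw [div_lt_div_iff₀ h1δ h1δ]; nlinarith)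
    have hq2' : (q : ℝ) * (1 + δ) < 1 := (lt_div_iff₀ h1δ).mp hq2
    have hq1' : 1 - δ < (q : ℝ) * (1 + δ) := (div_lt_iff₀ h1δ).mp hq1
    have hq0 : (0 : ℝ) < q := by nlinarith
    have hqle1 : (q : ℝ) ≤ 1 := by nlinarith
    refine ⟨(q : ℝ) • a, ⟨hA q a haA, ?_⟩, ?_⟩
    · rw [Metric.mem_closedBall, dist_zero_right, norm_smul, Real.norm_eq_abs,
        abs_of_pos hq0]
      nlinarith [norm_nonneg a]
    · have hd : dist x ((q : ℝ) • a) ≤ dist x a + dist a ((q : ℝ) • a) :=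
        dist_triangle _ _ _
      have heq : dist a ((q : ℝ) • a) = (1 - (q : ℝ)) * ‖a‖ := by
        rw [dist_eq_norm]
        have h3 : a - (q : ℝ) • a = (1 - (q : ℝ)) • a := by rw [sub_smul, one_smul]
        rw [h3, norm_smul, Real.norm_eq_abs, abs_of_nonneg (by linarith)]
      have hbound : (1 - (q : ℝ)) * ‖a‖ ≤ 2 * δ := by
        nlinarith [mul_le_mul_of_nonneg_left hna (by linarith : (0:ℝ) ≤ 1 - (q : ℝ))]
      rw [heq] at hd
      linarith
end

section
/- If there exist Banach spaces X and Y and a non-expansive (1-Lipschitz) bijection F : B_X → B_Y that is not an isometry, then there exist a Banach space Z and a non-expansive bijection F' : B_Z → B_Z that is not an isometry. -/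
noncomputable section Stmt1Aux

open scoped ENNReal

variable {W : Type} [NormedAddCommGroup W]

private abbrev seq0 (W : Type) [NormedAddCommGroup W] : Type := lp (fun _ : ℕ => W) ∞

private def cons0 (y : W) (b : ℕ → W) : ℕ → W
  | 0 => y
  | n + 1 => b n

private lemma memℓp_of_le {f : ℕ → W} {C : ℝ} (h : ∀ n, ‖f n‖ ≤ C) :
    Memℓp f ∞ :=
  memℓp_infty ⟨C, by rintro x ⟨n, rfl⟩; exact h n⟩

private def shiftL (a : seq0 W) : seq0 W :=
  ⟨fun n => a (n + 1), memℓp_of_le fun n =>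
    lp.norm_apply_le_norm ENNReal.top_ne_zero a (n + 1)⟩

private def consL (y : W) (b : seq0 W) : seq0 W :=
  ⟨cons0 y b, memℓp_of_le (C := max ‖y‖ ‖b‖) fun n => by
    cases n with
    | zero => exact le_max_left _ _
    | succ k => exact le_trans (lp.norm_apply_le_norm ENNReal.top_ne_zero b k) (le_max_right _ _)⟩

@[simp] private lemma shiftL_apply (a : seq0 W) (n : ℕ) : shiftL a n = a (n + 1) := rfl
@[simp] private lemma consL_apply_zero (y : W) (b : seq0 W) : consL y b 0 = y := rfl
@[simp] private lemma consL_apply_succ (y : W) (b : seq0 W) (n : ℕ) :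
    consL y b (n + 1) = b n := rfl

private lemma norm_le_one_iff' {a : seq0 W} : ‖a‖ ≤ 1 ↔ ∀ n, ‖a n‖ ≤ 1 :=
  ⟨fun h n => (lp.norm_apply_le_norm ENNReal.top_ne_zero a n).trans h,
   fun h => lp.norm_le_of_forall_le zero_le_one h⟩

private lemma shiftL_sub (a a' : seq0 W) : shiftL a - shiftL a' = shiftL (a - a') := by
  apply lp.ext
  funext n
  simp [lp.coeFn_sub, shiftL]
  rfl

private lemma consL_sub (y y' : W) (b b' : seq0 W) :
    consL y b - consL y' b' = consL (y - y') (b - b') := by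
  apply lp.ext
  funext n
  cases n with
  | zero => simp [lp.coeFn_sub]
  | succ k => simp [lp.coeFn_sub]

private lemma norm_shiftL_le (a : seq0 W) : ‖shiftL a‖ ≤ ‖a‖ :=
  lp.norm_le_of_forall_le (norm_nonneg a) fun n =>
    lp.norm_apply_le_norm ENNReal.top_ne_zero a (n + 1)

private lemma norm_consL_le (y : W) (b : seq0 W) : ‖consL y b‖ ≤ max ‖y‖ ‖b‖ := by
  refine lp.norm_le_of_forall_le (le_max_of_le_left (norm_nonneg _)) fun n => ?_
  cases n with
  | zero => exact le_max_left _ _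
  | succ k => exact le_trans (lp.norm_apply_le_norm ENNReal.top_ne_zero b k) (le_max_right _ _)

private lemma norm_consL_zero (y : W) : ‖consL y (0 : seq0 W)‖ = ‖y‖ := by
  refine le_antisymm ?_ (lp.norm_apply_le_norm ENNReal.top_ne_zero (consL y 0) 0)
  simpa using norm_consL_le y (0 : seq0 W)

end Stmt1Aux

/-- if there exist Banach spaces `X`, `Y` and a non-expansive bijection
`F : B_X → B_Y` which is not an isometry, then there exist a Banach space `Z` and a
non-expansive bijection `F' : B_Z → B_Z` which is not an isometry. -/
theorem stmt1
    (X Y : Type) [NormedAddCommGroup X] [NormedSpace ℝ X] [CompleteSpace X]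
    [NormedAddCommGroup Y] [NormedSpace ℝ Y] [CompleteSpace Y]
    (F : X → Y)
    (hbij : Set.BijOn F (Metric.closedBall (0 : X) 1) (Metric.closedBall (0 : Y) 1))
    (hlip : ∀ u ∈ Metric.closedBall (0 : X) 1, ∀ v ∈ Metric.closedBall (0 : X) 1,
      ‖F u - F v‖ ≤ ‖u - v‖)
    (hnoniso : ¬ ∀ u ∈ Metric.closedBall (0 : X) 1, ∀ v ∈ Metric.closedBall (0 : X) 1,
      ‖F u - F v‖ = ‖u - v‖) :
    ∃ (Z : Type) (_ : NormedAddCommGroup Z) (_ : NormedSpace ℝ Z) (_ : CompleteSpace Z)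
      (F' : Z → Z),
      Set.BijOn F' (Metric.closedBall (0 : Z) 1) (Metric.closedBall (0 : Z) 1) ∧
      (∀ u ∈ Metric.closedBall (0 : Z) 1, ∀ v ∈ Metric.closedBall (0 : Z) 1,
        ‖F' u - F' v‖ ≤ ‖u - v‖) ∧
      ¬ ∀ u ∈ Metric.closedBall (0 : Z) 1, ∀ v ∈ Metric.closedBall (0 : Z) 1,
        ‖F' u - F' v‖ = ‖u - v‖ := by
  classical
  haveI : Fact ((1 : ENNReal) ≤ ⊤) := ⟨le_top⟩
  push_neg at hnoniso
  obtain ⟨u, hu, v, hv, hne⟩ := hnoniso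
  set Z := seq0 X × seq0 Y with hZ
  set F' : Z → Z := fun z => (shiftL z.1, consL (F (z.1 0)) z.2) with hF'
  have hball : ∀ z : Z, z ∈ Metric.closedBall (0 : Z) 1 ↔
      (∀ n, ‖z.1 n‖ ≤ 1) ∧ (∀ n, ‖z.2 n‖ ≤ 1) := by
    intro z
    rw [mem_closedBall_zero_iff, Prod.norm_def, max_le_iff, norm_le_one_iff', norm_le_one_iff']
  have hmapsX : ∀ z : Z, z ∈ Metric.closedBall (0 : Z) 1 →
      z.1 0 ∈ Metric.closedBall (0 : X) 1 := fun z hz =>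
    mem_closedBall_zero_iff.mpr (((hball z).1 hz).1 0)
  refine ⟨Z, inferInstance, inferInstance, inferInstance, F', ⟨?_, ?_, ?_⟩, ?_, ?_⟩
  · -- MapsTo
    intro z hz
    obtain ⟨h1, h2⟩ := (hball z).1 hz
    refine (hball _).2 ⟨fun n => ?_, fun n => ?_⟩
    · simpa [hF'] using h1 (n + 1)
    · cases n with
      | zero =>
        simpa [hF'] using mem_closedBall_zero_iff.mp (hbij.mapsTo (hmapsX z hz))
      | succ k => simpa [hF'] using h2 k
  · -- InjOn
    intro z hz w hw heq
    have e1 : ∀ n, shiftL z.1 n = shiftL w.1 n := fun n => by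
      rw [show shiftL z.1 = shiftL w.1 from congrArg Prod.fst heq]
    have e2 : ∀ n, consL (F (z.1 0)) z.2 n = consL (F (w.1 0)) w.2 n := fun n => by
      rw [show consL (F (z.1 0)) z.2 = consL (F (w.1 0)) w.2 from congrArg Prod.snd heq]
    have h0 : z.1 0 = w.1 0 := by
      have := e2 0
      simp only [consL_apply_zero] at this
      exact hbij.injOn (hmapsX z hz) (hmapsX w hw) this
    have hfst : z.1 = w.1 := by
      apply lp.ext; funext n
      cases n with
      | zero => exact h0
      | succ k => simpa using e1 k
    have hsnd : z.2 = w.2 := by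
      apply lp.ext; funext n
      simpa using e2 (n + 1)
    exact Prod.ext hfst hsnd
  · -- SurjOn
    intro z hz
    obtain ⟨h1, h2⟩ := (hball z).1 hz
    obtain ⟨x, hx, hfx⟩ := hbij.surjOn (mem_closedBall_zero_iff.mpr (h2 0))
    refine ⟨(consL x z.1, shiftL z.2), ?_, ?_⟩
    · refine (hball _).2 ⟨fun n => ?_, fun n => ?_⟩
      · cases n with
        | zero => simpa using mem_closedBall_zero_iff.mp hx
        | succ k => simpa using h1 k
      · simpa using h2 (n + 1)
    · have hfst : shiftL (consL x z.1) = z.1 := by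
        apply lp.ext; funext n; simp
      have hsnd : consL (F (consL x z.1 0)) (shiftL z.2) = z.2 := by
        apply lp.ext; funext n
        cases n with
        | zero => simpa using hfx
        | succ k => simp
      exact Prod.ext hfst hsnd
  · -- non-expansive
    intro z hz w hw
    have hsub : F' z - F' w =
        (shiftL (z.1 - w.1), consL (F (z.1 0) - F (w.1 0)) (z.2 - w.2)) := by
      refine Prod.ext ?_ ?_
      · exact shiftL_sub z.1 w.1
      · exact consL_sub _ _ _ _
    rw [hsub, Prod.norm_def]
    have hzw : ‖z - w‖ = max ‖z.1 - w.1‖ ‖z.2 - w.2‖ := by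
      rw [Prod.norm_def]; rfl
    rw [hzw]
    apply max_le
    · exact le_max_of_le_left (norm_shiftL_le _)
    · refine le_trans (norm_consL_le _ _) (max_le ?_ (le_max_right _ _))
      refine le_max_of_le_left ?_
      refine le_trans (hlip _ (hmapsX z hz) _ (hmapsX w hw)) ?_
      have : z.1 0 - w.1 0 = (z.1 - w.1) 0 := by simp [lp.coeFn_sub]
      rw [this]
      exact lp.norm_apply_le_norm ENNReal.top_ne_zero _ 0
  · -- not an isometry
    intro hiso
    set zu : Z := (consL u 0, 0) with hzu
    set zv : Z := (consL v 0, 0) with hzv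
    have hmem : ∀ w : X, w ∈ Metric.closedBall (0 : X) 1 →
        ((consL w 0, 0) : Z) ∈ Metric.closedBall (0 : Z) 1 := by
      intro w hw
      refine (hball _).2 ⟨fun n => ?_, fun n => ?_⟩
      · cases n with
        | zero => simpa using mem_closedBall_zero_iff.mp hw
        | succ k => simp [lp.coeFn_zero]
      · simp [lp.coeFn_zero]
    have key := hiso zu (hmem u hu) zv (hmem v hv)
    have hshift0 : ∀ w : X, shiftL (consL w (0 : seq0 X)) = 0 := by
      intro w
      apply lp.ext; funext n
      simp [lp.coeFn_zero]
    have hL : F' zu - F' zv = ((0 : seq0 X), consL (F u - F v) (0 : seq0 Y)) := by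
      refine Prod.ext ?_ ?_
      · show shiftL (consL u 0) - shiftL (consL v 0) = 0
        rw [hshift0, hshift0, sub_self]
      · show consL (F u) (0 : seq0 Y) - consL (F v) 0 = consL (F u - F v) 0
        rw [consL_sub, sub_zero]
    have hR : zu - zv = (consL (u - v) (0 : seq0 X), (0 : seq0 Y)) := by
      refine Prod.ext ?_ ?_
      · show consL u (0 : seq0 X) - consL v 0 = consL (u - v) 0
        rw [consL_sub, sub_zero]
      · exact sub_zero _
    rw [hL, hR, Prod.norm_def, Prod.norm_def] at key
    simp only [norm_zero, norm_consL_zero] at key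
    rw [max_comm, max_eq_left (norm_nonneg _), max_eq_left (norm_nonneg _)] at key
    exact hne key
end

section
/- Let X be a Banach space and f : B_X → B_X a non-expansive homeomorphism that is not an isometry. Then X has a separable closed linear subspace Y such that f(B_Y) = B_Y and the restriction of f to B_Y is a non-expansive homeomorphism of B_Y that is not an isometry. -/
set_option maxHeartbeats 1000000

open Metric Set TopologicalSpace

/-- a non-expansive non-isometric homeomorphism `f` of the closed unit
ball of a Banach space `X` restricts, on the unit ball of some separable closed
subspace `Y`, to a non-expansive homeomorphism of `B_Y` that is not an isometry. -/
theorem stmt2 (X : Type*) [NormedAddCommGroup X] [NormedSpace ℝ X] [CompleteSpace X]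
    (f : Metric.closedBall (0 : X) 1 ≃ₜ Metric.closedBall (0 : X) 1)
    (hlip : ∀ u v : Metric.closedBall (0 : X) 1, ‖(f u : X) - (f v : X)‖ ≤ ‖(u : X) - (v : X)‖)
    (hnoniso : ¬ ∀ u v : Metric.closedBall (0 : X) 1,
      ‖(f u : X) - (f v : X)‖ = ‖(u : X) - (v : X)‖) :
    ∃ Y : Submodule ℝ X,
      IsClosed (Y : Set X) ∧
      TopologicalSpace.IsSeparable (Y : Set X) ∧
      ((fun u : Metric.closedBall (0 : X) 1 => (f u : X)) ''
          {u : Metric.closedBall (0 : X) 1 | (u : X) ∈ Y}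
        = Metric.closedBall (0 : X) 1 ∩ (Y : Set X)) ∧
      ¬ ∀ u v : Metric.closedBall (0 : X) 1, (u : X) ∈ Y → (v : X) ∈ Y →
        ‖(f u : X) - (f v : X)‖ = ‖(u : X) - (v : X)‖ := by
  classical
  push_neg at hnoniso
  obtain ⟨u₀, v₀, hw⟩ := hnoniso
  -- extensions of f and f.symm to all of X
  set F : X → X := fun x =>
    if h : x ∈ Metric.closedBall (0 : X) 1 then (f ⟨x, h⟩ : X) else x with hFdef
  set G : X → X := fun x =>
    if h : x ∈ Metric.closedBall (0 : X) 1 then (f.symm ⟨x, h⟩ : X) else x with hGdef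
  have hF : ∀ (x : X) (h : x ∈ Metric.closedBall (0 : X) 1), F x = (f ⟨x, h⟩ : X) :=
    fun x h => dif_pos h
  have hG : ∀ (x : X) (h : x ∈ Metric.closedBall (0 : X) 1), G x = (f.symm ⟨x, h⟩ : X) :=
    fun x h => dif_pos h
  have hFmem : ∀ x ∈ Metric.closedBall (0 : X) 1, F x ∈ Metric.closedBall (0 : X) 1 :=
    fun x h => by rw [hF x h]; exact (f ⟨x, h⟩).2
  have hGmem : ∀ x ∈ Metric.closedBall (0 : X) 1, G x ∈ Metric.closedBall (0 : X) 1 :=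
    fun x h => by rw [hG x h]; exact (f.symm ⟨x, h⟩).2
  have hFcont : ContinuousOn F (Metric.closedBall (0 : X) 1) := by
    rw [continuousOn_iff_continuous_restrict]
    have : (Metric.closedBall (0 : X) 1).domRestrict F
        = fun u : Metric.closedBall (0 : X) 1 => (f u : X) := by
      funext u
      simp only [Set.domRestrict_apply, hF u u.2]
    rw [this]
    exact continuous_subtype_val.comp f.continuous
  have hGcont : ContinuousOn G (Metric.closedBall (0 : X) 1) := by
    rw [continuousOn_iff_continuous_restrict]
    have : (Metric.closedBall (0 : X) 1).domRestrict G
        = fun u : Metric.closedBall (0 : X) 1 => (f.symm u : X) := by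
      funext u
      simp only [Set.domRestrict_apply, hG u u.2]
    rw [this]
    exact continuous_subtype_val.comp f.symm.continuous
  -- the increasing family of separable sets
  let A : ℕ → Set X := fun n => Nat.rec ({(u₀ : X), (v₀ : X)})
    (fun _ s => s ∪ F '' (Metric.closedBall (0 : X) 1 ∩ closure (Submodule.span ℝ s : Set X))
      ∪ G '' (Metric.closedBall (0 : X) 1 ∩ closure (Submodule.span ℝ s : Set X))) n
  have hA0 : A 0 = {(u₀ : X), (v₀ : X)} := rfl
  have hAsucc : ∀ n, A (n + 1) = A n
      ∪ F '' (Metric.closedBall (0 : X) 1 ∩ closure (Submodule.span ℝ (A n) : Set X))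
      ∪ G '' (Metric.closedBall (0 : X) 1 ∩ closure (Submodule.span ℝ (A n) : Set X)) :=
    fun n => rfl
  have hAsep : ∀ n, IsSeparable (A n) := by
    intro n
    induction n with
    | zero => exact ((Set.finite_singleton _).insert _).isSeparable
    | succ n ih =>
      rw [hAsucc]
      have hcl : IsSeparable
          (Metric.closedBall (0 : X) 1 ∩ closure (Submodule.span ℝ (A n) : Set X)) :=
        (ih.span.closure).mono Set.inter_subset_right
      exact ((ih.union ((hFcont.mono Set.inter_subset_left).isSeparable_image hcl)).union
        ((hGcont.mono Set.inter_subset_left).isSeparable_image hcl))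
  have hAmono : Monotone A := monotone_nat_of_le_succ fun n => by
    rw [hAsucc]; exact (Set.subset_union_left).trans Set.subset_union_left
  -- the subspace
  set Y : Submodule ℝ X := (Submodule.span ℝ (⋃ n, A n)).topologicalClosure with hYdef
  have hYcoe : (Y : Set X) = closure (Submodule.span ℝ (⋃ n, A n) : Set X) :=
    Submodule.topologicalClosure_coe _
  have hYclosed : IsClosed (Y : Set X) := Submodule.isClosed_topologicalClosure _
  have hAY : ∀ n, A n ⊆ (Y : Set X) := fun n => by
    refine fun x hx => Submodule.le_topologicalClosure _ (Submodule.subset_span ?_)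
    exact Set.mem_iUnion.2 ⟨n, hx⟩
  have hBYclosed : IsClosed (Metric.closedBall (0 : X) 1 ∩ (Y : Set X)) :=
    Metric.isClosed_closedBall.inter hYclosed
  -- the approximating union
  set T : Set X :=
    ⋃ n, (Metric.closedBall (0 : X) 1 ∩ closure (Submodule.span ℝ (A n) : Set X)) with hTdef
  have hTB : T ⊆ Metric.closedBall (0 : X) 1 :=
    Set.iUnion_subset fun n => Set.inter_subset_left
  -- F and G map T into B ∩ Y
  have hFT : F '' T ⊆ Metric.closedBall (0 : X) 1 ∩ (Y : Set X) := by
    rintro _ ⟨x, hx, rfl⟩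
    obtain ⟨n, hn⟩ := Set.mem_iUnion.1 hx
    refine ⟨hFmem x hn.1, hAY (n + 1) ?_⟩
    rw [hAsucc]
    exact Or.inl (Or.inr ⟨x, hn, rfl⟩)
  have hGT : G '' T ⊆ Metric.closedBall (0 : X) 1 ∩ (Y : Set X) := by
    rintro _ ⟨x, hx, rfl⟩
    obtain ⟨n, hn⟩ := Set.mem_iUnion.1 hx
    refine ⟨hGmem x hn.1, hAY (n + 1) ?_⟩
    rw [hAsucc]
    exact Or.inr ⟨x, hn, rfl⟩
  -- B ∩ Y is contained in the closure of T (scaling argument)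
  have hBYT : Metric.closedBall (0 : X) 1 ∩ (Y : Set X) ⊆ closure T := by
    rintro y ⟨hyB, hyY⟩
    set φ : X → X := fun x => (max 1 ‖x‖)⁻¹ • x with hφdef
    have hφcont : Continuous φ := by
      refine Continuous.smul (Continuous.inv₀ (continuous_const.max continuous_norm) ?_)
        continuous_id
      intro x
      positivity
    have hφmem : ∀ (x : X), φ x ∈ Metric.closedBall (0 : X) 1 := by
      intro x
      rw [Metric.mem_closedBall, dist_zero_right, hφdef]
      simp only [norm_smul, Real.norm_eq_abs]
      rw [abs_of_nonneg (by positivity), inv_mul_le_one₀ (by positivity)]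
      exact le_max_right 1 ‖x‖
    have hφy : φ y = y := by
      have h1 : ‖y‖ ≤ 1 := by
        rw [Metric.mem_closedBall, dist_zero_right] at hyB; exact hyB
      simp [hφdef, max_eq_left h1]
    have hyc : y ∈ closure (Submodule.span ℝ (⋃ n, A n) : Set X) := by
      rw [← hYcoe]; exact hyY
    have himg : φ '' (Submodule.span ℝ (⋃ n, A n) : Set X) ⊆ T := by
      rintro _ ⟨x, hx, rfl⟩
      rw [Submodule.span_iUnion] at hx
      have hdir : Directed (· ≤ ·) (fun n => Submodule.span ℝ (A n)) := fun i j =>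
        ⟨max i j, Submodule.span_mono (hAmono (le_max_left i j)),
          Submodule.span_mono (hAmono (le_max_right i j))⟩
      obtain ⟨n, hn⟩ := (Submodule.mem_iSup_of_directed _ hdir).1 hx
      refine Set.mem_iUnion.2 ⟨n, hφmem x, subset_closure ?_⟩
      exact Submodule.smul_mem _ _ hn
    have hin : φ y ∈ closure T :=
      closure_mono himg (image_closure_subset_closure_image hφcont ⟨y, hyc, rfl⟩)
    rw [hφy] at hin
    exact hin
  -- F and G map B ∩ Y into itself
  have key : ∀ (H : X → X), ContinuousOn H (Metric.closedBall (0 : X) 1) →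
      H '' T ⊆ Metric.closedBall (0 : X) 1 ∩ (Y : Set X) →
      H '' (Metric.closedBall (0 : X) 1 ∩ (Y : Set X))
        ⊆ Metric.closedBall (0 : X) 1 ∩ (Y : Set X) := by
    intro H hHc hHT
    have hclT : closure T ⊆ Metric.closedBall (0 : X) 1 :=
      Metric.isClosed_closedBall.closure_subset_iff.2 hTB
    calc H '' (Metric.closedBall (0 : X) 1 ∩ (Y : Set X))
        ⊆ H '' closure T := Set.image_mono hBYT
      _ ⊆ closure (H '' T) := (hHc.mono hclT).image_closure
      _ ⊆ closure (Metric.closedBall (0 : X) 1 ∩ (Y : Set X)) := closure_mono hHT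
      _ = Metric.closedBall (0 : X) 1 ∩ (Y : Set X) := hBYclosed.closure_eq
  have hFBY := key F hFcont hFT
  have hGBY := key G hGcont hGT
  have hFGinv : ∀ x ∈ Metric.closedBall (0 : X) 1, F (G x) = x := by
    intro x hx
    have h1 : G x ∈ Metric.closedBall (0 : X) 1 := hGmem x hx
    rw [hF _ h1]
    have h2 : (⟨G x, h1⟩ : Metric.closedBall (0 : X) 1) = f.symm ⟨x, hx⟩ :=
      Subtype.ext (hG x hx)
    rw [h2, f.apply_symm_apply]
  -- the image equality
  have himageq : F '' (Metric.closedBall (0 : X) 1 ∩ (Y : Set X))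
      = Metric.closedBall (0 : X) 1 ∩ (Y : Set X) := by
    refine Set.Subset.antisymm hFBY fun x hx => ?_
    exact ⟨G x, hGBY ⟨x, hx, rfl⟩, hFGinv x hx.1⟩
  refine ⟨Y, hYclosed, ?_, ?_, ?_⟩
  · rw [hYcoe]
    exact ((IsSeparable.iUnion hAsep).span).closure
  · rw [← himageq]
    ext y
    constructor
    · rintro ⟨u, hu, rfl⟩
      exact ⟨(u : X), ⟨u.2, hu⟩, by rw [hF (u : X) u.2]⟩
    · rintro ⟨x, ⟨hxB, hxY⟩, rfl⟩
      exact ⟨⟨x, hxB⟩, hxY, (hF x hxB).symm⟩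
  · intro h
    exact hw (h u₀ v₀ (hAY 0 (Or.inl rfl)) (hAY 0 (Or.inr rfl)))
end

section
/- Let B_0, …, B_{n−1} be graphs in which every vertex has degree at most 1, and let G be their co-normal product, i.e., the graph on the product vertex set where u ~ v iff u_i ~ v_i in B_i for some i. Then any clique of size 2^n − 1 in G has at most one extension to a clique of size 2^n; in particular, G contains no clique of size 2^n + 1. -/
/-- The co-normal product of a family of simple graphs: `u ~ v` iff some coordinate
pair is adjacent. -/
def conormalProd {n : ℕ} {V : Fin n → Type*} (B : ∀ i, SimpleGraph (V i)) :
    SimpleGraph (∀ i, V i) where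
  Adj u v := ∃ i, (B i).Adj (u i) (v i)
  symm := by
    constructor
    rintro u v ⟨i, h⟩
    exact ⟨i, h.symm⟩
  loopless := by
    constructor
    rintro u ⟨i, h⟩
    exact (B i).loopless.irrefl _ h

/-- if every `B_i` has maximum degree at most 1, then in the co-normal
product `G` any clique of `2^n - 1` vertices extends in at most one way to a clique
of `2^n` vertices; in particular `G` has no clique of `2^n + 1` vertices. -/
theorem stmt4 (n : ℕ) (V : Fin n → Type*) (B : ∀ i, SimpleGraph (V i))
    (hdeg : ∀ i, ∀ a b c : V i, (B i).Adj a b → (B i).Adj a c → b = c) :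
    (∀ C : Set (∀ i, V i), C.Pairwise (conormalProd B).Adj → C.ncard = 2 ^ n - 1 →
      ∀ v w, v ∉ C → w ∉ C →
        (insert v C).Pairwise (conormalProd B).Adj →
        (insert w C).Pairwise (conormalProd B).Adj → v = w) ∧
    ¬ ∃ D : Set (∀ i, V i), D.Pairwise (conormalProd B).Adj ∧ D.ncard = 2 ^ n + 1 := by
  classical
  letI lo : ∀ i, LinearOrder (V i) := fun i => IsWellOrder.linearOrder WellOrderingRel
  -- the coloring
  let F : (∀ i, V i) → (Fin n → Prop) := fun x i => ∃ b, (B i).Adj (x i) b ∧ b < x i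
  -- adjacent coordinates get different colors
  have hadj : ∀ (x y : ∀ i, V i) (i : Fin n),
      (B i).Adj (x i) (y i) → F x i ≠ F y i := by
    intro x y i hxy
    have key : ∀ a b : V i, (B i).Adj a b → a < b →
        ¬ (∃ c, (B i).Adj a c ∧ c < a) ∧ (∃ c, (B i).Adj b c ∧ c < b) := by
      intro a b hab hlt
      refine ⟨?_, ⟨a, hab.symm, hlt⟩⟩
      rintro ⟨c, hac, hca⟩
      have hcb : c = b := hdeg i a c b hac hab
      exact absurd hlt (not_lt.2 (hcb ▸ hca).le)
    have hne : x i ≠ y i := hxy.ne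
    rcases hne.lt_or_gt with h | h
    · obtain ⟨h1, h2⟩ := key _ _ hxy h
      intro he
      exact h1 (show F x i from he.symm ▸ h2)
    · obtain ⟨h1, h2⟩ := key _ _ hxy.symm h
      intro he
      exact h1 (show F y i from he ▸ h2)
  -- F is injective on cliques
  have hinj : ∀ D : Set (∀ i, V i), D.Pairwise (conormalProd B).Adj → D.InjOn F := by
    intro D hD x hx y hy hxy
    by_contra hne
    obtain ⟨i, hi⟩ := hD hx hy hne
    exact hadj x y i hi (congrFun hxy i)
  have hfin : ∀ D : Set (∀ i, V i), D.Pairwise (conormalProd B).Adj → D.Finite := by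
    intro D hD
    exact Set.Finite.of_finite_image (Set.toFinite _) (hinj D hD)
  have hcard2 : Fintype.card (Fin n → Prop) = 2 ^ n := by
    simp [Fintype.card_fun]
  have hle : ∀ D : Set (∀ i, V i), D.Pairwise (conormalProd B).Adj →
      D.ncard ≤ 2 ^ n := by
    intro D hD
    calc D.ncard = (F '' D).ncard := (Set.ncard_image_of_injOn (hinj D hD)).symm
      _ ≤ (Set.univ : Set (Fin n → Prop)).ncard :=
        Set.ncard_le_ncard (Set.subset_univ _) Set.finite_univ
      _ = 2 ^ n := by rw [Set.ncard_univ, Nat.card_eq_fintype_card, hcard2]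
  constructor
  · intro C hC hCcard v w hvC hwC hv hw
    have hpow : 1 ≤ 2 ^ n := Nat.one_le_two_pow
    have hCfin := hfin C hC
    -- surjectivity of F on a full clique extending C
    have hsurj : ∀ u, u ∉ C → (insert u C).Pairwise (conormalProd B).Adj →
        F '' insert u C = Set.univ := by
      intro u hu hcl
      have h1 : (Set.univ : Set (Fin n → Prop)).ncard ≤ (F '' insert u C).ncard := by
        rw [Set.ncard_univ, Nat.card_eq_fintype_card, hcard2,
          Set.ncard_image_of_injOn (hinj _ hcl),
          Set.ncard_insert_of_notMem hu hCfin, hCcard]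
        omega
      exact Set.eq_of_subset_of_ncard_le (Set.subset_univ _) h1 Set.finite_univ
    have hsv := hsurj v hvC hv
    have hsw := hsurj w hwC hw
    -- F v = F w
    have hFvw : F v = F w := by
      have : F w ∈ F '' insert v C := by rw [hsv]; trivial
      obtain ⟨u, hu, huw⟩ := this
      rcases hu with rfl | huC
      · exact huw
      · exact absurd ((hinj _ hw (Set.mem_insert_of_mem _ huC)
          (Set.mem_insert _ _) huw) ▸ huC) hwC
    funext i
    set q : Fin n → Prop := Function.update (F v) i (¬ F v i) with hq
    have step : ∀ u, u ∉ C → (insert u C).Pairwise (conormalProd B).Adj →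
        F '' insert u C = Set.univ → F u = F v →
        ∃ y ∈ C, F y = q ∧ (B i).Adj (u i) (y i) := by
      intro u huC hcl hs hFu
      have : q ∈ F '' insert u C := by rw [hs]; trivial
      obtain ⟨y, hy, hFy⟩ := this
      have hyu : y ≠ u := by
        rintro rfl
        have h1 : F y i = q i := congrFun hFy i
        rw [hq, Function.update_self, ← hFu] at h1
        exact iff_not_self (iff_of_eq h1)
      have hyC : y ∈ C := hy.resolve_left hyu
      obtain ⟨j, hj⟩ := hcl (Set.mem_insert _ _) (Set.mem_insert_of_mem _ hyC) hyu.symm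
      have hji : j = i := by
        by_contra hji
        have h1 : F y j = F u j := by
          have h2 : F y j = q j := congrFun hFy j
          rw [hq, Function.update_of_ne hji, ← hFu] at h2
          exact h2
        exact hadj u y j hj h1.symm
      exact ⟨y, hyC, hFy, hji ▸ hj⟩
    obtain ⟨y, hyC, hFy, hav⟩ := step v hvC hv hsv rfl
    obtain ⟨y', hy'C, hFy', haw⟩ := step w hwC hw hsw hFvw.symm
    have : y = y' := hinj C hC hyC hy'C (hFy.trans hFy'.symm)
    subst this
    exact hdeg i (y i) (v i) (w i) hav.symm haw.symm
  · rintro ⟨D, hD, hcard⟩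
    have := hle D hD
    omega
end

section
/- Let Z be the ℓ∞-sum of finitely many nontrivial strictly convex Banach spaces and f : B_Z → B_Z a 1-Lipschitz bijection mapping extreme points to extreme points, with inverse g = f^{-1}. Suppose the componentwise factors g_i : S_i → S_{σ(i)} of g are bijections, and define γ : B_Z → B_Z by π_{σ(i)}(γ(x)) = ‖π_i x‖ · g_i(π_i x / ‖π_i x‖) when π_i x ≠ 0 and = 0 otherwise. Then g = γ. -/
open Finset Metric Set Function

section aux
variable {n : ℕ} {X : Fin n → Type*} [∀ i, NormedAddCommGroup (X i)]

lemma piLp_top_apply_le (x : PiLp ⊤ X) (i : Fin n) : ‖x i‖ ≤ ‖x‖ := by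
  rw [PiLp.norm_eq_ciSup]
  exact le_ciSup (f := fun j => ‖x j‖) (Finite.bddAbove_range _) i

lemma piLp_top_norm_le [Nonempty (Fin n)] {x : PiLp ⊤ X} {C : ℝ} (h : ∀ i, ‖x i‖ ≤ C) :
    ‖x‖ ≤ C := by
  rw [PiLp.norm_eq_ciSup]
  exact ciSup_le h

lemma natIneq {n A B a b : ℕ} (h2 : A + 1 ≤ B) (h3 : a ≤ A) (h4 : B ≤ n) :
    n * A + a < n * B + b := by
  have h5 : a < n := by omega
  calc n * A + a < n * A + n := by omega
    _ = n * (A + 1) := by ring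
    _ ≤ n * B := Nat.mul_le_mul_left n h2
    _ ≤ n * B + b := Nat.le_add_right _ _

end aux

theorem keyLemma {n : ℕ} {X : Fin n → Type*}
    [∀ i, NormedAddCommGroup (X i)] [∀ i, NormedSpace ℝ (X i)]
    [∀ i, StrictConvexSpace ℝ (X i)] [∀ i, Nontrivial (X i)]
    (g : PiLp ⊤ X → PiLp ⊤ X)
    (hgmaps : ∀ x : PiLp ⊤ X, ‖x‖ ≤ 1 → ‖g x‖ ≤ 1)
    (hexp : ∀ P : PiLp ⊤ X, ‖P‖ ≤ 1 → ∀ Q : PiLp ⊤ X, ‖Q‖ ≤ 1 → ‖P - Q‖ ≤ ‖g P - g Q‖)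
    (σ : Equiv.Perm (Fin n)) (gi : ∀ i, X i → X (σ i))
    (hgi_bij : ∀ i, Set.BijOn (gi i) (Metric.sphere (0 : X i) 1)
      (Metric.sphere (0 : X (σ i)) 1))
    (hfact : ∀ x : PiLp ⊤ X, ‖x‖ ≤ 1 → ∀ i : Fin n, ‖x i‖ = 1 → g x (σ i) = gi i (x i)) :
    ∀ M : ℕ, ∀ x : PiLp ⊤ X, ‖x‖ ≤ 1 → ∀ i : Fin n,
      n * (Finset.univ.filter fun j => ‖x j‖ < 1).card
        + (Finset.univ.filter fun j => ‖x j‖ < 1 ∧ ‖x i‖ < ‖x j‖).card ≤ M →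
      g x (σ i) = ‖x i‖ • gi i (‖x i‖⁻¹ • x i) := by
  classical
  have hgi_norm : ∀ (i : Fin n) (v : X i), ‖v‖ = 1 → ‖gi i v‖ = 1 := by
    intro i v hv
    exact mem_sphere_zero_iff_norm.mp
      ((hgi_bij i).mapsTo (mem_sphere_zero_iff_norm.mpr hv))
  have hinv : ∀ (l : Fin n) (b : X (σ l)), ‖b‖ = 1 →
      ‖Function.invFunOn (gi l) (Metric.sphere 0 1) b‖ = 1 ∧
        gi l (Function.invFunOn (gi l) (Metric.sphere 0 1) b) = b := by
    intro l b hb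
    have hbmem : b ∈ Metric.sphere (0 : X (σ l)) 1 := mem_sphere_zero_iff_norm.mpr hb
    obtain ⟨w, hw, hweq⟩ := (hgi_bij l).2.2 hbmem
    have hex : ∃ w ∈ Metric.sphere (0 : X l) 1, gi l w = b := ⟨w, hw, hweq⟩
    exact ⟨mem_sphere_zero_iff_norm.mp (Function.invFunOn_mem hex), Function.invFunOn_eq hex⟩
  -- antipodality of the factors
  have hanti : ∀ (i : Fin n) (v : X i), ‖v‖ = 1 → gi i (-v) = -gi i v := by
    intro i v hv
    have hne : Nonempty (Fin n) := ⟨i⟩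
    have hex : ∀ j, ∃ y : X j, ‖y‖ = 1 := fun j => exists_norm_eq (X j) zero_le_one
    choose e he using hex
    set z : PiLp ⊤ X := WithLp.toLp ⊤ (Function.update e i v) with hz
    set z' : PiLp ⊤ X := WithLp.toLp ⊤ (Function.update e i (-v)) with hz'
    have hzc : ∀ j, ‖z j‖ = 1 := by
      intro j
      rcases eq_or_ne j i with rfl | hj
      · rw [hz, WithLp.ofLp_toLp, Function.update_self]; exact hv
      · rw [hz, WithLp.ofLp_toLp, Function.update_of_ne hj]; exact he j
    have hzc' : ∀ j, ‖z' j‖ = 1 := by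
      intro j
      rcases eq_or_ne j i with rfl | hj
      · rw [hz', WithLp.ofLp_toLp, Function.update_self, norm_neg]; exact hv
      · rw [hz', WithLp.ofLp_toLp, Function.update_of_ne hj]; exact he j
    have hzB : ‖z‖ ≤ 1 := piLp_top_norm_le (fun j => (hzc j).le)
    have hz'B : ‖z'‖ ≤ 1 := piLp_top_norm_le (fun j => (hzc' j).le)
    have h2 : (2:ℝ) ≤ ‖z - z'‖ := by
      have h := piLp_top_apply_le (z - z') i
      have hzi : (z - z') i = v - -v := by
        show z i - z' i = v - -v
        rw [hz, hz', WithLp.ofLp_toLp, WithLp.ofLp_toLp, Function.update_self, Function.update_self]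
      rw [hzi] at h
      have : v - -v = (2:ℝ) • v := by
        rw [sub_neg_eq_add, two_smul]
      rw [this, norm_smul, Real.norm_ofNat, hv, mul_one] at h
      exact h
    have hgz : ∀ j, g z (σ j) = gi j (z j) := fun j => hfact z hzB j (hzc j)
    have hgz' : ∀ j, g z' (σ j) = gi j (z' j) := fun j => hfact z' hz'B j (hzc' j)
    have hcomp : ∀ l : Fin n, ‖(g z - g z') l‖ ≤ ‖gi i v - gi i (-v)‖ := by
      intro l
      rcases eq_or_ne l (σ i) with rfl | hl
      · have : (g z - g z') (σ i) = gi i v - gi i (-v) := by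
          show g z (σ i) - g z' (σ i) = _
          rw [hgz i, hgz' i, hz, hz', WithLp.ofLp_toLp, WithLp.ofLp_toLp, Function.update_self, Function.update_self]
        rw [this]
      · set j := σ.symm l with hjdef
        have hjl : σ j = l := σ.apply_symm_apply l
        have hji : j ≠ i := by
          intro h
          exact hl (by rw [← hjl, h])
        have : (g z - g z') l = 0 := by
          show g z l - g z' l = 0
          rw [← hjl, hgz j, hgz' j, hz, hz', WithLp.ofLp_toLp, WithLp.ofLp_toLp, Function.update_of_ne hji,
            Function.update_of_ne hji, sub_self]
        rw [this, norm_zero]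
        positivity
    have hD : (2:ℝ) ≤ ‖gi i v - gi i (-v)‖ :=
      le_trans (le_trans h2 (hexp z hzB z' hz'B)) (piLp_top_norm_le hcomp)
    have h1 : ‖gi i v‖ = 1 := hgi_norm i v hv
    have h1' : ‖gi i (-v)‖ = 1 := hgi_norm i (-v) (by rw [norm_neg]; exact hv)
    have heq : ‖gi i v + -gi i (-v)‖ = ‖gi i v‖ + ‖-gi i (-v)‖ := by
      have hle : ‖gi i v + -gi i (-v)‖ ≤ ‖gi i v‖ + ‖-gi i (-v)‖ := norm_add_le _ _
      have hge : (2:ℝ) ≤ ‖gi i v + -gi i (-v)‖ := by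
        rw [← sub_eq_add_neg]; exact hD
      rw [norm_neg, h1, h1'] at *
      linarith
    have hsr : SameRay ℝ (gi i v) (-gi i (-v)) := sameRay_iff_norm_add.mpr heq
    have hfin : gi i v = -gi i (-v) := hsr.eq_of_norm_eq (by rw [norm_neg, h1, h1'])
    rw [hfin, neg_neg]
  intro M
  induction M using Nat.strong_induction_on with
  | _ M IH =>
  intro x hx i hmu
  have hne : Nonempty (Fin n) := ⟨i⟩
  have hxi_le : ‖x i‖ ≤ 1 := le_trans (piLp_top_apply_le x i) hx
  rcases eq_or_lt_of_le hxi_le with h1 | hr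
  · rw [h1, inv_one, one_smul, one_smul]
    exact hfact x hx i h1
  -- from now on ‖x i‖ < 1
  have IH' : ∀ x' : PiLp ⊤ X, ‖x'‖ ≤ 1 → ∀ i' : Fin n,
      n * (Finset.univ.filter fun j => ‖x' j‖ < 1).card
        + (Finset.univ.filter fun j => ‖x' j‖ < 1 ∧ ‖x' i'‖ < ‖x' j‖).card <
      n * (Finset.univ.filter fun j => ‖x j‖ < 1).card
        + (Finset.univ.filter fun j => ‖x j‖ < 1 ∧ ‖x i‖ < ‖x j‖).card →
      g x' (σ i') = ‖x' i'‖ • gi i' (‖x' i'‖⁻¹ • x' i') := by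
    intro x' hx' i' hlt
    exact IH _ (lt_of_lt_of_le hlt hmu) x' hx' i' le_rfl
  have card_drop : ∀ x' : PiLp ⊤ X, ∀ i0 : Fin n, ‖x i0‖ < 1 →
      (∀ l, ‖x' l‖ < 1 → l ≠ i0 ∧ ‖x l‖ < 1) → ∀ i' : Fin n,
      n * (Finset.univ.filter fun j => ‖x' j‖ < 1).card
        + (Finset.univ.filter fun j => ‖x' j‖ < 1 ∧ ‖x' i'‖ < ‖x' j‖).card <
      n * (Finset.univ.filter fun j => ‖x j‖ < 1).card
        + (Finset.univ.filter fun j => ‖x j‖ < 1 ∧ ‖x i‖ < ‖x j‖).card := by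
    intro x' i0 hi0 hsub i'
    have hssub : (Finset.univ.filter fun j => ‖x' j‖ < 1) ⊆
        (Finset.univ.filter fun j => ‖x j‖ < 1).erase i0 := by
      intro l hl
      rw [Finset.mem_filter] at hl
      obtain ⟨hl1, hl2⟩ := hsub l hl.2
      exact Finset.mem_erase.mpr ⟨hl1, Finset.mem_filter.mpr ⟨Finset.mem_univ _, hl2⟩⟩
    have hi0mem : i0 ∈ (Finset.univ.filter fun j => ‖x j‖ < 1) :=
      Finset.mem_filter.mpr ⟨Finset.mem_univ _, hi0⟩
    have hpos : 1 ≤ (Finset.univ.filter fun j => ‖x j‖ < 1).card :=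
      Finset.card_pos.mpr ⟨i0, hi0mem⟩
    have h2 : (Finset.univ.filter fun j => ‖x' j‖ < 1).card + 1 ≤
        (Finset.univ.filter fun j => ‖x j‖ < 1).card := by
      have := Finset.card_le_card hssub
      rw [Finset.card_erase_of_mem hi0mem] at this
      omega
    have h3 : (Finset.univ.filter fun j => ‖x' j‖ < 1 ∧ ‖x' i'‖ < ‖x' j‖).card ≤
        (Finset.univ.filter fun j => ‖x' j‖ < 1).card := by
      apply Finset.card_le_card
      intro l hl
      rw [Finset.mem_filter] at hl ⊢
      exact ⟨hl.1, hl.2.1⟩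
    have h4 : (Finset.univ.filter fun j => ‖x j‖ < 1).card ≤ n := by
      calc (Finset.univ.filter fun j => ‖x j‖ < 1).card ≤ (Finset.univ : Finset (Fin n)).card :=
            Finset.card_filter_le _ _
        _ = n := by simp
    exact natIneq h2 h3 h4
  have card_same : ∀ j : Fin n, ‖x j‖ < 1 → ‖x i‖ < ‖x j‖ →
      n * (Finset.univ.filter fun l => ‖x l‖ < 1).card
        + (Finset.univ.filter fun l => ‖x l‖ < 1 ∧ ‖x j‖ < ‖x l‖).card <
      n * (Finset.univ.filter fun l => ‖x l‖ < 1).card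
        + (Finset.univ.filter fun l => ‖x l‖ < 1 ∧ ‖x i‖ < ‖x l‖).card := by
    intro j hj1 hji
    apply Nat.add_lt_add_left
    apply Finset.card_lt_card
    have hsub : (Finset.univ.filter fun l => ‖x l‖ < 1 ∧ ‖x j‖ < ‖x l‖) ⊆
        (Finset.univ.filter fun l => ‖x l‖ < 1 ∧ ‖x i‖ < ‖x l‖) := by
      intro l hl
      rw [Finset.mem_filter] at hl ⊢
      exact ⟨hl.1, hl.2.1, lt_trans hji hl.2.2⟩
    rw [Finset.ssubset_iff_of_subset hsub]
    refine ⟨j, Finset.mem_filter.mpr ⟨Finset.mem_univ _, hj1, hji⟩, ?_⟩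
    intro hmem
    exact absurd (Finset.mem_filter.mp hmem).2.2 (lt_irrefl _)
  -- Step (a): componentwise norm bound
  have boundA : ∀ j : Fin n, ‖x j‖ < 1 → ‖g x (σ j)‖ ≤ ‖x j‖ := by
    intro j hj
    by_cases ha : g x (σ j) = 0
    · rw [ha, norm_zero]; exact norm_nonneg _
    have hgxB : ‖g x‖ ≤ 1 := hgmaps x hx
    have ha_pos : 0 < ‖g x (σ j)‖ := norm_pos_iff.mpr ha
    have ha_ne : ‖g x (σ j)‖ ≠ 0 := ne_of_gt ha_pos
    have ha_le : ‖g x (σ j)‖ ≤ 1 := le_trans (piLp_top_apply_le (g x) (σ j)) hgxB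
    set base : ∀ l, X l := fun l =>
      if ‖x l‖ < 1 then
        ‖g x (σ l)‖ • Function.invFunOn (gi l) (Metric.sphere 0 1) (‖g x (σ l)‖⁻¹ • g x (σ l))
      else x l with hbase
    set v : X j := Function.invFunOn (gi j) (Metric.sphere 0 1)
      (‖g x (σ j)‖⁻¹ • g x (σ j)) with hvdef
    have hunit : ‖‖g x (σ j)‖⁻¹ • g x (σ j)‖ = 1 := by
      rw [norm_smul, norm_inv, norm_norm, inv_mul_cancel₀ ha_ne]
    have hvfacts := hinv j _ hunit
    set c : PiLp ⊤ X := WithLp.toLp ⊤ (Function.update base j v) with hcdef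
    have hcj : c j = v := (Function.update_self _ _ _ : Function.update base j v j = v)
    have hcne : ∀ l, l ≠ j → c l = base l := by
      intro l hl
      exact (Function.update_of_ne hl _ _ : Function.update base j v l = base l)
    -- norms of components of c
    have hbase_norm : ∀ l, ‖base l‖ ≤ 1 ∧ (‖x l‖ < 1 → g x (σ l) ≠ 0 → ‖base l‖ = ‖g x (σ l)‖) := by
      intro l
      by_cases hxl : ‖x l‖ < 1
      · by_cases hgl : g x (σ l) = 0
        · constructor
          · rw [hbase]
            simp only [if_pos hxl, hgl, norm_zero]
            simp
          · intro _ h; exact absurd hgl h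
        · have hgl_ne : ‖g x (σ l)‖ ≠ 0 := fun h => hgl (norm_eq_zero.mp h)
          have hul : ‖‖g x (σ l)‖⁻¹ • g x (σ l)‖ = 1 := by
            rw [norm_smul, norm_inv, norm_norm, inv_mul_cancel₀ hgl_ne]
          have hwl := hinv l _ hul
          have heq : ‖base l‖ = ‖g x (σ l)‖ := by
            rw [hbase]
            simp only [if_pos hxl]
            rw [norm_smul, norm_norm, hwl.1, mul_one]
          constructor
          · rw [heq]
            exact le_trans (piLp_top_apply_le (g x) (σ l)) hgxB
          · intro _ _; exact heq
      · constructor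
        · rw [hbase]
          simp only [if_neg hxl]
          exact le_trans (piLp_top_apply_le x l) hx
        · intro h; exact absurd h hxl
    have hc_norm : ∀ l, ‖c l‖ ≤ 1 := by
      intro l
      rcases eq_or_ne l j with rfl | hl
      · rw [hcj, hvfacts.1]
      · rw [hcne l hl]
        exact (hbase_norm l).1
    have hcB : ‖c‖ ≤ 1 := piLp_top_norm_le hc_norm
    -- c's small components are among x's small components, away from j
    have hcsub : ∀ l, ‖c l‖ < 1 → l ≠ j ∧ ‖x l‖ < 1 := by
      intro l hl
      rcases eq_or_ne l j with rfl | hlj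
      · rw [hcj, hvfacts.1] at hl
        exact absurd hl (lt_irrefl _)
      · refine ⟨hlj, ?_⟩
        by_contra hxl
        have : c l = x l := by rw [hcne l hlj, hbase]; simp only [if_neg hxl]
        rw [this] at hl
        exact hxl hl
    -- g c agrees with g x away from σ j
    have hgc : ∀ l, l ≠ j → g c (σ l) = g x (σ l) := by
      intro l hl
      by_cases hxl : ‖x l‖ < 1
      · have hcl : c l = base l := hcne l hl
        have hkey := IH' c hcB l (card_drop c j hj hcsub l)
        by_cases hgl : g x (σ l) = 0
        · rw [hkey, hcl, hbase]
          simp only [if_pos hxl, hgl, norm_zero]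
          simp
        · have hgl_ne : ‖g x (σ l)‖ ≠ 0 := fun h => hgl (norm_eq_zero.mp h)
          have hul : ‖‖g x (σ l)‖⁻¹ • g x (σ l)‖ = 1 := by
            rw [norm_smul, norm_inv, norm_norm, inv_mul_cancel₀ hgl_ne]
          have hwl := hinv l _ hul
          have hnorm_cl : ‖c l‖ = ‖g x (σ l)‖ := by
            rw [hcl]; exact (hbase_norm l).2 hxl hgl
          have hcl_eq : c l = ‖g x (σ l)‖ •
              Function.invFunOn (gi l) (Metric.sphere 0 1) (‖g x (σ l)‖⁻¹ • g x (σ l)) := by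
            rw [hcl, hbase]; simp only [if_pos hxl]
          rw [hkey, hnorm_cl, hcl_eq, smul_smul, inv_mul_cancel₀ hgl_ne, one_smul,
            hwl.2, smul_smul, mul_inv_cancel₀ hgl_ne, one_smul]
      · have hxl1 : ‖x l‖ = 1 := le_antisymm (le_trans (piLp_top_apply_le x l) hx) (not_lt.mp hxl)
        have hcl : c l = x l := by rw [hcne l hl, hbase]; simp only [if_neg hxl]
        rw [hfact c hcB l (by rw [hcl]; exact hxl1), hcl, hfact x hx l hxl1]
    have hgcj : g c (σ j) = ‖g x (σ j)‖⁻¹ • g x (σ j) := by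
      rw [hfact c hcB j (by rw [hcj]; exact hvfacts.1), hcj]
      exact hvfacts.2
    -- the distance estimates
    have hxc : 1 - ‖x j‖ ≤ ‖x - c‖ := by
      have h7 := piLp_top_apply_le (x - c) j
      have h8 : (x - c) j = x j - v := by
        show x j - c j = x j - v
        rw [hcj]
      rw [h8] at h7
      have h9 : ‖v‖ - ‖x j‖ ≤ ‖x j - v‖ := by
        rw [norm_sub_rev]
        exact norm_sub_norm_le _ _
      rw [hvfacts.1] at h9
      linarith
    have hgce : ‖g x - g c‖ ≤ 1 - ‖g x (σ j)‖ := by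
      apply piLp_top_norm_le
      intro l
      rcases eq_or_ne l (σ j) with rfl | hl
      · have h10 : (g x - g c) (σ j) = (1 - ‖g x (σ j)‖⁻¹) • g x (σ j) := by
          show g x (σ j) - g c (σ j) = _
          rw [hgcj, sub_smul, one_smul]
        rw [h10, norm_smul, Real.norm_eq_abs]
        have h11 : (1:ℝ) ≤ ‖g x (σ j)‖⁻¹ := by
          nlinarith [inv_mul_cancel₀ ha_ne, inv_pos.mpr ha_pos]
        rw [abs_of_nonpos (by linarith)]
        nlinarith [inv_mul_cancel₀ ha_ne]
      · obtain ⟨l', rfl⟩ : ∃ l', l = σ l' := ⟨σ.symm l, (σ.apply_symm_apply l).symm⟩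
        have hl'j : l' ≠ j := fun h => hl (by rw [h])
        have h12 : (g x - g c) (σ l') = 0 := by
          show g x (σ l') - g c (σ l') = 0
          rw [hgc l' hl'j, sub_self]
        rw [h12, norm_zero]
        linarith
    have := hexp x hx c hcB
    linarith
  
  by_cases h0 : ‖x i‖ = 0
  · rw [h0, zero_smul]
    have hb := boundA i hr
    rw [h0] at hb
    exact norm_le_zero_iff.mp hb
  · have hrpos : 0 < ‖x i‖ := lt_of_le_of_ne (norm_nonneg _) (Ne.symm h0)
    set u : X i := ‖x i‖⁻¹ • x i with hudef
    have hu : ‖u‖ = 1 := by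
      rw [hudef, norm_smul, norm_inv, norm_norm, inv_mul_cancel₀ h0]
    set c : PiLp ⊤ X := WithLp.toLp ⊤ (Function.update x i (-u)) with hcdef
    have hci : c i = -u := (Function.update_self _ _ _ : Function.update x.ofLp i (-u) i = -u)
    have hcl : ∀ l, l ≠ i → c l = x l := fun l hl => (Function.update_of_ne hl _ _ : Function.update x.ofLp i (-u) l = x l)
    have hcB : ‖c‖ ≤ 1 := by
      apply piLp_top_norm_le
      intro l
      rcases eq_or_ne l i with rfl | hl
      · rw [hci, norm_neg, hu]
      · rw [hcl l hl]
        exact le_trans (piLp_top_apply_le x l) hx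
    set p : X (σ i) := gi i u with hpdef
    have hp : ‖p‖ = 1 := hgi_norm i u hu
    have hgc_i : g c (σ i) = -p := by
      rw [hfact c hcB i (by rw [hci, norm_neg]; exact hu), hci, hanti i u hu]
    set a : X (σ i) := g x (σ i) with hadef
    have haB : ‖a‖ ≤ ‖x i‖ := boundA i hr
    have hcsub : ∀ l, ‖c l‖ < 1 → l ≠ i ∧ ‖x l‖ < 1 := by
      intro l hl
      rcases eq_or_ne l i with rfl | hli
      · rw [hci, norm_neg, hu] at hl
        exact absurd hl (lt_irrefl _)
      · rw [hcl l hli] at hl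
        exact ⟨hli, hl⟩
    have hcomp : ∀ l, l ≠ σ i → ‖(g x - g c) l‖ ≤ 2 * ‖x i‖ := by
      intro l hl
      obtain ⟨j, rfl⟩ : ∃ j, l = σ j := ⟨σ.symm l, (σ.apply_symm_apply l).symm⟩
      have hji : j ≠ i := fun h => hl (by rw [h])
      have hshow : (g x - g c) (σ j) = g x (σ j) - g c (σ j) := rfl
      by_cases hxj : ‖x j‖ < 1
      · have hgcj : g c (σ j) = ‖x j‖ • gi j (‖x j‖⁻¹ • x j) := by
          have hkey := IH' c hcB j (card_drop c i hr hcsub j)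
          rw [hcl j hji] at hkey
          exact hkey
        by_cases hij : ‖x i‖ < ‖x j‖
        · have hgxj : g x (σ j) = ‖x j‖ • gi j (‖x j‖⁻¹ • x j) :=
            IH' x hx j (card_same j hxj hij)
          rw [hshow, hgxj, hgcj, sub_self, norm_zero]
          positivity
        · push_neg at hij
          have h5 : ‖g x (σ j)‖ ≤ ‖x j‖ := boundA j hxj
          have h6 : ‖‖x j‖ • gi j (‖x j‖⁻¹ • x j)‖ ≤ ‖x j‖ := by
            by_cases hxj0 : ‖x j‖ = 0
            · rw [hxj0, zero_smul, norm_zero]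
            · have huj : ‖‖x j‖⁻¹ • x j‖ = 1 := by
                rw [norm_smul, norm_inv, norm_norm, inv_mul_cancel₀ hxj0]
              rw [norm_smul, norm_norm, hgi_norm j _ huj, mul_one]
          rw [hshow, hgcj]
          calc ‖g x (σ j) - ‖x j‖ • gi j (‖x j‖⁻¹ • x j)‖
              ≤ ‖g x (σ j)‖ + ‖‖x j‖ • gi j (‖x j‖⁻¹ • x j)‖ := norm_sub_le _ _
            _ ≤ ‖x j‖ + ‖x j‖ := add_le_add h5 h6
            _ ≤ 2 * ‖x i‖ := by linarith
      · have hxj1 : ‖x j‖ = 1 :=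
          le_antisymm (le_trans (piLp_top_apply_le x j) hx) (not_lt.mp hxj)
        have e1 : g x (σ j) = gi j (x j) := hfact x hx j hxj1
        have e2 : g c (σ j) = gi j (c j) := hfact c hcB j (by rw [hcl j hji]; exact hxj1)
        rw [hshow, e1, e2, hcl j hji, sub_self, norm_zero]
        positivity
    have hxc : 1 + ‖x i‖ ≤ ‖x - c‖ := by
      have h7 := piLp_top_apply_le (x - c) i
      have h8 : (x - c) i = (‖x i‖ + 1) • u := by
        show x i - c i = _
        rw [hci, sub_neg_eq_add, add_smul, one_smul, hudef, smul_smul,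
          mul_inv_cancel₀ h0, one_smul]
      rw [h8, norm_smul, Real.norm_eq_abs, abs_of_pos (by positivity), hu, mul_one] at h7
      linarith
    have h9 : ‖x - c‖ ≤ ‖g x - g c‖ := hexp x hx c hcB
    have h10 : ‖g x - g c‖ ≤ max (‖a + p‖) (2 * ‖x i‖) := by
      apply piLp_top_norm_le
      intro l
      rcases eq_or_ne l (σ i) with rfl | hl
      · have : (g x - g c) (σ i) = a + p := by
          show g x (σ i) - g c (σ i) = a + p
          rw [hgc_i, ← hadef, sub_neg_eq_add]
        rw [this]
        exact le_max_left _ _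
      · exact le_trans (hcomp l hl) (le_max_right _ _)
    have h11 : 1 + ‖x i‖ ≤ ‖a + p‖ := by
      by_contra hcon
      push_neg at hcon
      have : max (‖a + p‖) (2 * ‖x i‖) < 1 + ‖x i‖ := by
        apply max_lt hcon
        linarith
      linarith
    have h12 : ‖a + p‖ ≤ ‖a‖ + ‖p‖ := norm_add_le _ _
    have h13 : ‖a‖ = ‖x i‖ := by
      rw [hp] at h12
      linarith
    have h14 : ‖a + p‖ = ‖a‖ + ‖p‖ := by
      rw [hp, h13]
      linarith
    have hsr : SameRay ℝ a p := sameRay_iff_norm_add.mpr h14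
    have h15 : ‖a‖ • p = ‖p‖ • a := hsr.norm_smul_eq
    rw [hp, one_smul, h13] at h15
    exact h15.symm


/-- let `f` be a 1-Lipschitz bijection of the closed unit ball of the
ℓ∞-sum of nontrivial strictly convex Banach spaces mapping extreme points to extreme
points, with inverse `g`, and suppose the componentwise factors `gᵢ` of `g` are
bijections of the unit spheres. Then `g` coincides with the positively homogeneous
map `γ` with `π_{σ i} (γ x) = ‖π_i x‖ • gᵢ (π_i x / ‖π_i x‖)` (and `0` when
`π_i x = 0`). -/
theorem stmt17 (n : ℕ) (X : Fin n → Type*)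
    [∀ i, NormedAddCommGroup (X i)] [∀ i, NormedSpace ℝ (X i)]
    [∀ i, CompleteSpace (X i)] [∀ i, StrictConvexSpace ℝ (X i)] [∀ i, Nontrivial (X i)]
    (f g : PiLp ⊤ X → PiLp ⊤ X)
    (hbij : Set.BijOn f (Metric.closedBall (0 : PiLp ⊤ X) 1)
      (Metric.closedBall (0 : PiLp ⊤ X) 1))
    (hlip : ∀ u ∈ Metric.closedBall (0 : PiLp ⊤ X) 1,
      ∀ v ∈ Metric.closedBall (0 : PiLp ⊤ X) 1, ‖f u - f v‖ ≤ ‖u - v‖)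
    (hext : ∀ z ∈ Set.extremePoints ℝ (Metric.closedBall (0 : PiLp ⊤ X) 1),
      f z ∈ Set.extremePoints ℝ (Metric.closedBall (0 : PiLp ⊤ X) 1))
    (hgmaps : Set.MapsTo g (Metric.closedBall (0 : PiLp ⊤ X) 1)
      (Metric.closedBall (0 : PiLp ⊤ X) 1))
    (hginv₁ : ∀ x ∈ Metric.closedBall (0 : PiLp ⊤ X) 1, g (f x) = x)
    (hginv₂ : ∀ x ∈ Metric.closedBall (0 : PiLp ⊤ X) 1, f (g x) = x)
    (σ : Equiv.Perm (Fin n)) (gi : ∀ i, X i → X (σ i))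
    (hgi_bij : ∀ i, Set.BijOn (gi i) (Metric.sphere (0 : X i) 1)
      (Metric.sphere (0 : X (σ i)) 1))
    (hfact : ∀ x ∈ Metric.closedBall (0 : PiLp ⊤ X) 1, ∀ i : Fin n,
      ‖x i‖ = 1 → g x (σ i) = gi i (x i)) :
    ∀ x ∈ Metric.closedBall (0 : PiLp ⊤ X) 1, ∀ i : Fin n,
      g x (σ i) = ‖x i‖ • gi i (‖x i‖⁻¹ • x i) := by
  have hgmaps' : ∀ x : PiLp ⊤ X, ‖x‖ ≤ 1 → ‖g x‖ ≤ 1 := fun x hx =>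
    mem_closedBall_zero_iff.mp (hgmaps (mem_closedBall_zero_iff.mpr hx))
  have hexp : ∀ P : PiLp ⊤ X, ‖P‖ ≤ 1 → ∀ Q : PiLp ⊤ X, ‖Q‖ ≤ 1 →
      ‖P - Q‖ ≤ ‖g P - g Q‖ := by
    intro P hP Q hQ
    have hP' : P ∈ Metric.closedBall (0 : PiLp ⊤ X) 1 := mem_closedBall_zero_iff.mpr hP
    have hQ' : Q ∈ Metric.closedBall (0 : PiLp ⊤ X) 1 := mem_closedBall_zero_iff.mpr hQ
    have h := hlip (g P) (hgmaps hP') (g Q) (hgmaps hQ')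
    rwa [hginv₂ P hP', hginv₂ Q hQ'] at h
  have hfact' : ∀ x : PiLp ⊤ X, ‖x‖ ≤ 1 → ∀ i : Fin n, ‖x i‖ = 1 →
      g x (σ i) = gi i (x i) := fun x hx =>
    hfact x (mem_closedBall_zero_iff.mpr hx)
  intro x hx i
  classical
  exact keyLemma g hgmaps' hexp σ gi hgi_bij hfact' _ x (mem_closedBall_zero_iff.mp hx) i le_rfl
end

section
/- Let F : B_X → B_X be a bijection of the closed unit ball of a Banach space X such that F is 1-Lipschitz, F(S_X) = S_X, and F(αx) = αF(x) for all x ∈ S_X and α ∈ [−1, 1]. Then F is an isometry. -/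
/-- Cascales–Kadets–Orihuela–Wingler, Lemma 2.5: a 1-Lipschitz
bijection `F` of the closed unit ball of a Banach space with `F(S_X) = S_X` and
`F (α • x) = α • F x` for all unit vectors `x` and `α ∈ [-1, 1]` is an isometry. -/
theorem stmt19 (X : Type*) [NormedAddCommGroup X] [NormedSpace ℝ X] [CompleteSpace X]
    (F : X → X)
    (hbij : Set.BijOn F (Metric.closedBall (0 : X) 1) (Metric.closedBall (0 : X) 1))
    (hlip : ∀ u ∈ Metric.closedBall (0 : X) 1, ∀ v ∈ Metric.closedBall (0 : X) 1,
      ‖F u - F v‖ ≤ ‖u - v‖)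
    (hsph : F '' Metric.sphere (0 : X) 1 = Metric.sphere (0 : X) 1)
    (hhom : ∀ x : X, ‖x‖ = 1 → ∀ α : ℝ, α ∈ Set.Icc (-1 : ℝ) 1 → F (α • x) = α • F x) :
    ∀ u ∈ Metric.closedBall (0 : X) 1, ∀ v ∈ Metric.closedBall (0 : X) 1,
      ‖F u - F v‖ = ‖u - v‖ := by
  intro u hu v hv
  have hu' : ‖u‖ ≤ 1 := mem_closedBall_zero_iff.mp hu
  have hv' : ‖v‖ ≤ 1 := mem_closedBall_zero_iff.mp hv
  refine le_antisymm (hlip u hu v hv) ?_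
  by_cases huv : u = v
  · simp [huv]
  have hd : 0 < ‖u - v‖ := norm_sub_pos_iff.mpr huv
  set d : ℝ := ‖u - v‖ with hddef
  set w : X := d⁻¹ • (u - v) with hwdef
  have hw : ‖w‖ = 1 := by
    rw [hwdef, norm_smul_of_nonneg (by positivity), ← hddef, inv_mul_cancel₀ hd.ne']
  have hdw : d • w = u - v := by
    rw [hwdef, smul_smul, mul_inv_cancel₀ hd.ne', one_smul]
  -- `F 0 = 0` and homogeneity on the whole ball
  have hF0 : F 0 = 0 := by
    have h := hhom w hw 0 ⟨by norm_num, by norm_num⟩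
    simpa using h
  have hom : ∀ z : X, ‖z‖ ≤ 1 → ∀ s : ℝ, 0 ≤ s → s ≤ 1 → F (s • z) = s • F z := by
    intro z hz s hs0 hs1
    rcases eq_or_ne z 0 with rfl | hz0
    · simp [hF0]
    · have hnz : (0:ℝ) < ‖z‖ := norm_pos_iff.mpr hz0
      set y : X := ‖z‖⁻¹ • z with hydef
      have hy : ‖y‖ = 1 := by
        rw [hydef, norm_smul_of_nonneg (by positivity), inv_mul_cancel₀ hnz.ne']
      have hzy : ‖z‖ • y = z := by
        rw [hydef, smul_smul, mul_inv_cancel₀ hnz.ne', one_smul]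
      have h1 : F z = ‖z‖ • F y := by
        have h := hhom y hy ‖z‖ ⟨by linarith, hz⟩
        rwa [hzy] at h
      have h2 : F (s • z) = (s * ‖z‖) • F y := by
        have hb1 : (-1 : ℝ) ≤ s * ‖z‖ := by nlinarith
        have hb2 : s * ‖z‖ ≤ 1 := by nlinarith
        have h := hhom y hy (s * ‖z‖) ⟨hb1, hb2⟩
        rwa [mul_smul, hzy] at h
      rw [h2, h1, smul_smul]
  set c : X := u + v with hcdef
  have hcle : ‖c‖ ≤ 2 := by
    calc ‖c‖ ≤ ‖u‖ + ‖v‖ := norm_add_le u v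
    _ ≤ 2 := by linarith
  set ψ : ℝ → ℝ := fun s => ‖s • w + c‖ - s with hψdef
  have hψs : ∀ s : ℝ, ψ s = ‖s • w + c‖ - s := fun s => rfl
  have hψub : ∀ s : ℝ, 0 ≤ s → ψ s ≤ ‖c‖ := by
    intro s hs
    have h1 : ‖s • w + c‖ ≤ ‖s • w‖ + ‖c‖ := norm_add_le _ _
    have h2 : ‖s • w‖ = s := by rw [norm_smul_of_nonneg hs, hw, mul_one]
    rw [hψs]; linarith
  have hψlb : ∀ s : ℝ, 0 ≤ s → -‖c‖ ≤ ψ s := by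
    intro s hs
    have h2 : ‖s • w‖ = s := by rw [norm_smul_of_nonneg hs, hw, mul_one]
    have h1 : ‖s • w‖ ≤ ‖s • w + c‖ + ‖c‖ := by
      calc ‖s • w‖ = ‖(s • w + c) - c‖ := by rw [add_sub_cancel_right]
      _ ≤ ‖s • w + c‖ + ‖c‖ := norm_sub_le _ _
    rw [hψs]; linarith
  -- the key estimate
  have key : ∀ t : ℝ, 2 ≤ t → d + (ψ (2*t + d) - ψ t) ≤ ‖F u - F v‖ := by
    intro t ht
    set x : X := t • w + u with hxdef
    have hxu : x - u = t • w := by rw [hxdef, add_sub_cancel_right]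
    have hxv : x + v = t • w + c := by rw [hxdef, hcdef]; abel
    have h2x : (2:ℝ) • x = (2*t + d) • w + c := by
      rw [add_smul, hdw, hxdef, hcdef]
      module
    have htw : ‖t • w‖ = t := by
      rw [norm_smul_of_nonneg (by linarith), hw, mul_one]
    have hR1 : 1 ≤ ‖x‖ := by
      have h1 : ‖x - u‖ ≤ ‖x‖ + ‖u‖ := norm_sub_le _ _
      rw [hxu, htw] at h1
      linarith
    set R : ℝ := ‖x‖ with hRdef
    have hR0 : (0:ℝ) < R := by linarith
    have hRi0 : (0:ℝ) ≤ R⁻¹ := by positivity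
    have hRi1 : R⁻¹ ≤ 1 := by
      rw [inv_le_one_iff₀]; right; exact hR1
    set p : X := R⁻¹ • x with hpdef
    have hp : ‖p‖ = 1 := by
      rw [hpdef, norm_smul_of_nonneg hRi0, ← hRdef, inv_mul_cancel₀ hR0.ne']
    have hpB : p ∈ Metric.closedBall (0:X) 1 := mem_closedBall_zero_iff.mpr hp.le
    have hnpB : -p ∈ Metric.closedBall (0:X) 1 := by
      rw [mem_closedBall_zero_iff, norm_neg, hp]
    have huRB : R⁻¹ • u ∈ Metric.closedBall (0:X) 1 := by
      rw [mem_closedBall_zero_iff, norm_smul_of_nonneg hRi0]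
      nlinarith [norm_nonneg u]
    have hvRB : R⁻¹ • v ∈ Metric.closedBall (0:X) 1 := by
      rw [mem_closedBall_zero_iff, norm_smul_of_nonneg hRi0]
      nlinarith [norm_nonneg v]
    have hFp : ‖F p‖ = 1 := by
      have hpS : p ∈ Metric.sphere (0:X) 1 := by
        rw [mem_sphere_zero_iff_norm]; exact hp
      have : F p ∈ Metric.sphere (0:X) 1 := hsph ▸ Set.mem_image_of_mem F hpS
      exact mem_sphere_zero_iff_norm.mp this
    have hFnp : F (-p) = -(F p) := by
      have h := hhom p hp (-1) ⟨le_refl _, by norm_num⟩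
      simpa using h
    have tri : ‖F p - F (-p)‖ ≤ ‖F p - F (R⁻¹ • u)‖ + ‖F (R⁻¹ • u) - F (R⁻¹ • v)‖
        + ‖F (R⁻¹ • v) - F (-p)‖ := by
      have h := dist_triangle4 (F p) (F (R⁻¹ • u)) (F (R⁻¹ • v)) (F (-p))
      simpa [dist_eq_norm] using h
    have lhs2 : ‖F p - F (-p)‖ = 2 := by
      rw [hFnp, sub_neg_eq_add, ← two_smul ℝ (F p), norm_smul_of_nonneg (by norm_num), hFp]
      norm_num
    have b1 : ‖F p - F (R⁻¹ • u)‖ ≤ R⁻¹ * t := by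
      have h := hlip p hpB (R⁻¹ • u) huRB
      have he : ‖p - R⁻¹ • u‖ = R⁻¹ * t := by
        rw [hpdef, ← smul_sub, norm_smul_of_nonneg hRi0, hxu, htw]
      linarith [he ▸ h]
    have b2 : ‖F (R⁻¹ • u) - F (R⁻¹ • v)‖ = R⁻¹ * ‖F u - F v‖ := by
      rw [hom u hu' R⁻¹ hRi0 hRi1, hom v hv' R⁻¹ hRi0 hRi1, ← smul_sub,
        norm_smul_of_nonneg hRi0]
    have b3 : ‖F (R⁻¹ • v) - F (-p)‖ ≤ R⁻¹ * ‖t • w + c‖ := by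
      have h := hlip (R⁻¹ • v) hvRB (-p) hnpB
      have he : ‖R⁻¹ • v - -p‖ = R⁻¹ * ‖t • w + c‖ := by
        rw [sub_neg_eq_add, hpdef, ← smul_add, norm_smul_of_nonneg hRi0]
        rw [show v + x = t • w + c by rw [← hxv]; abel]
      linarith [he ▸ h]
    have hchain : 2 ≤ R⁻¹ * (t + ‖F u - F v‖ + ‖t • w + c‖) := by
      rw [lhs2] at tri
      rw [b2] at tri
      calc (2:ℝ) ≤ R⁻¹ * t + R⁻¹ * ‖F u - F v‖ + R⁻¹ * ‖t • w + c‖ := by linarith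
      _ = R⁻¹ * (t + ‖F u - F v‖ + ‖t • w + c‖) := by ring
    have h2R : 2 * R ≤ t + ‖F u - F v‖ + ‖t • w + c‖ := by
      rw [inv_mul_eq_div, le_div_iff₀ hR0] at hchain
      linarith
    have h2Rnorm : 2 * R = ‖(2*t + d) • w + c‖ := by
      rw [← h2x, norm_smul_of_nonneg (by norm_num : (0:ℝ) ≤ 2), ← hRdef]
    rw [hψs, hψs]
    have := h2Rnorm ▸ h2R
    linarith
  -- conclude by letting t → ∞ along a geometric sequence
  refine le_of_forall_pos_le_add ?_
  intro ε hε
  by_contra hcon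
  push_neg at hcon
  have hdrop : ∀ t : ℝ, 2 ≤ t → ψ (2*t + d) ≤ ψ t - ε := by
    intro t ht
    have h := key t ht
    linarith
  set a : ℕ → ℝ := fun n => Nat.rec (2:ℝ) (fun _ x => 2*x + d) n with hadef
  have haS : ∀ n, a (n+1) = 2 * a n + d := fun n => rfl
  have hage : ∀ n, 2 ≤ a n := by
    intro n
    induction n with
    | zero => exact le_refl _
    | succ n ih => rw [haS]; linarith
  have hdec : ∀ n : ℕ, ψ (a n) ≤ ψ (a 0) - n * ε := by
    intro n
    induction n with
    | zero => simp
    | succ n ih =>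
      have h := hdrop (a n) (hage n)
      rw [haS]
      push_cast
      linarith
  obtain ⟨n, hn⟩ := exists_nat_gt ((2 * ‖c‖) / ε)
  have h1 := hψlb (a n) (by linarith [hage n])
  have h2 := hψub (a 0) (by linarith [hage 0])
  have h3 : 2 * ‖c‖ < n * ε := (div_lt_iff₀ hε).mp hn
  linarith [hdec n]
end
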